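/- Let K/F be a cyclic cubic extension of number fields with Gal(K/F) = ⟨σ⟩. Then in K*/(K*)³ the following two subsets are equal: {α·(K*)³ : α ∈ K*, N_{K/F}(α) = 1, and σ(α)/α ∈ (K*)³} and {r·N_{K/F}(β)·(K*)³ : r ∈ F*, r³ = 1, β ∈ K*}. (Equivalently, the G-invariant part of the image of the norm-one elements of K* in K*/(K*)³ equals the image of μ₃(F)·N_{K/F}(K*).) -/

import Mathlib

/-!
By Hilbert 90 a norm-one `α` is `c / σ c`, and then `σ α / α = (σ c)³ / N(c)`, so the condition
on `σ α / α` says that `N(c) = d³` is a cube in `K`. Since `[K : F] = 3` is odd, the cube roots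
of unity of `K` lie in `F`; hence `σ d = ζ d` with `ζ³ = 1`, `ζ ∈ F`, and `N(d) = d³ = N(c)`.
Hilbert 90 for `c / d` gives `c = d · e / σ e`, whence `α = ζ⁻¹ · u / σ u = ζ⁻¹ N(e) / (σ e)³` with
`u = e / σ e`. Conversely, `r N(β) ≡ r N(β) / β³` modulo cubes, and this element has norm `r³ = 1`
and `σ`-quotient `(β / σ β)³`.
-/

open Finset Polynomial Module

namespace AlgEquiv

variable {F K : Type*} [Field F] [Field K] [Algebra F K]

/-- Hilbert 90, proved directly because `groupCohomology.exists_div_of_norm_eq_one` only covers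
fields in `Type`. -/
theorem exists_div_apply_eq_of_prod_pow_eq_one (σ : K ≃ₐ[F] K) (hσ : 0 < orderOf σ) {α : K}
    (hα : ∏ i ∈ range (orderOf σ), (σ ^ i) α = 1) : ∃ b ≠ 0, b / σ b = α := by
  set n := orderOf σ
  set c : ℕ → K := fun i ↦ ∏ j ∈ range i, (σ ^ j) α
  have hc : ∀ i, α * σ (c i) = c (i + 1) := fun i ↦ by
    simp only [c, prod_range_succ', map_prod, pow_succ', mul_apply, pow_zero, one_apply]
    ring
  have hind : LinearIndependent K (fun i : Fin n ↦ ⇑(σ ^ (i : ℕ))) :=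
    (linearIndependent_monoidHom K K).comp
      (fun i : Fin n ↦ ((σ ^ (i : ℕ) : K ≃ₐ[F] K) : K →+* K).toMonoidHom)
      fun i j hij ↦ Fin.ext <| pow_injOn_Iio_orderOf i.2 j.2 <|
        AlgEquiv.ext fun x ↦ DFunLike.congr_fun hij x
  set b : K → K := fun θ ↦ ∑ i ∈ range n, c i * (σ ^ i) θ
  obtain ⟨θ, hθ⟩ : ∃ θ, b θ ≠ 0 := by
    by_contra! h
    have := Fintype.linearIndependent_iff.1 hind (fun i ↦ c i) (funext fun θ ↦ by
      simp only [Finset.sum_apply, Pi.smul_apply, smul_eq_mul, Pi.zero_apply]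
      rw [Fin.sum_univ_eq_sum_range (fun i ↦ c i * (σ ^ i) θ)]
      exact h θ) ⟨0, hσ⟩
    simp [c] at this
  refine ⟨b θ, hθ, (div_eq_iff ((map_ne_zero σ).2 hθ)).2 ?_⟩
  set f : ℕ → K := fun i ↦ c i * (σ ^ i) θ
  -- the sum defining `b θ` is invariant under the shift `i ↦ i + 1`, as `f n = f 0`
  have hshift : ∑ i ∈ range n, f (i + 1) = b θ := by
    have hn : f n = f 0 := by
      simp only [f, c, hα, n, pow_orderOf_eq_one, one_apply, range_zero, prod_empty, pow_zero]
    have := (sum_range_succ' f n).symm.trans (sum_range_succ f n)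
    rwa [hn, add_left_inj] at this
  nth_rw 1 [← hshift]
  simp only [b, f, map_sum, mul_sum]
  refine sum_congr rfl fun i _ ↦ ?_
  rw [← hc, pow_succ', mul_apply, map_mul]
  ring

theorem apply_algebraMap_div_pow_div_eq (σ : K ≃ₐ[F] K) {r : F} (hr : r ≠ 0) {β : K}
    (hβ : β ≠ 0) :
    σ (algebraMap F K r / β ^ 3) / (algebraMap F K r / β ^ 3) = (β / σ β) ^ 3 := by
  have : algebraMap F K r ≠ 0 := (FaithfulSMul.algebraMap_eq_zero_iff F K).not.2 hr
  have : σ β ≠ 0 := (map_ne_zero σ).2 hβ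
  rw [map_div₀, map_pow, AlgEquiv.commutes]
  field_simp

end AlgEquiv

section FiniteDimensional

variable {F K : Type*} [Field F] [Field K] [Algebra F K] [FiniteDimensional F K]

theorem mem_range_algebraMap_of_pow_three_eq_one (hK : Odd (finrank F K)) {w : K}
    (hw : w ^ 3 = 1) : w ∈ (algebraMap F K).range := by
  by_cases h1 : w = 1
  · exact h1 ▸ one_mem _
  have hint : IsIntegral F w := .of_finite F w
  have hroot : aeval w (X ^ 2 + X + 1 : F[X]) = 0 := by
    have : (w - 1) * (w ^ 2 + w + 1) = 0 := by linear_combination hw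
    simpa using (mul_eq_zero.1 this).resolve_left (sub_ne_zero.2 h1)
  have hle : (minpoly F w).natDegree ≤ 2 := by
    have hq : (X ^ 2 + X + 1 : F[X]).natDegree = 2 := by compute_degree!
    exact hq ▸ natDegree_le_of_dvd (minpoly.dvd F w hroot) (by
      intro h; simpa using congrArg (eval 0) h)
  by_contra hF
  have h2 : (minpoly F w).natDegree = 2 :=
    le_antisymm hle ((minpoly.two_le_natDegree_iff hint).2 hF)
  have := minpoly.degree_dvd hint
  rw [h2] at this
  exact (Nat.not_even_iff_odd.2 hK) (even_iff_two_dvd.2 this)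

theorem AlgEquiv.exists_apply_eq_algebraMap_mul_of_apply_pow_three_eq (hK : Odd (finrank F K))
    (σ : K ≃ₐ[F] K) {d : K} (hd : d ≠ 0) (hσd : σ (d ^ 3) = d ^ 3) :
    ∃ r : F, r ^ 3 = 1 ∧ σ d = algebraMap F K r * d := by
  have hw : (σ d / d) ^ 3 = 1 := by
    rw [div_pow, ← map_pow, hσd, div_self (pow_ne_zero 3 hd)]
  obtain ⟨r, hr⟩ := mem_range_algebraMap_of_pow_three_eq_one hK hw
  refine ⟨r, FaithfulSMul.algebraMap_injective F K ?_, ?_⟩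
  · rw [map_pow, hr, hw, map_one]
  · rw [hr, div_mul_cancel₀ _ hd]

theorem norm_algebraMap_mul_norm_div_pow_finrank (r : F) {β : K} (hβ : β ≠ 0) :
    Algebra.norm F (algebraMap F K (r * Algebra.norm F β) / β ^ finrank F K) =
      r ^ finrank F K := by
  rw [div_eq_mul_inv, map_mul, Algebra.norm_inv, map_pow, Algebra.norm_algebraMap, mul_pow,
    mul_inv_cancel_right₀ (pow_ne_zero _ (Algebra.norm_ne_zero_iff.2 hβ))]

end FiniteDimensional

section CyclicGalois

variable {F K : Type*} [Field F] [Field K] [Algebra F K] [FiniteDimensional F K] [IsGalois F K]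
  {σ : K ≃ₐ[F] K}

theorem orderOf_eq_finrank_of_forall_mem_zpowers
    (hσ : ∀ τ : K ≃ₐ[F] K, τ ∈ Subgroup.zpowers σ) : orderOf σ = finrank F K := by
  rw [orderOf_eq_card_of_forall_mem_zpowers hσ, IsGalois.card_aut_eq_finrank]

theorem algebraMap_norm_eq_prod_pow_of_forall_mem_zpowers
    (hσ : ∀ τ : K ≃ₐ[F] K, τ ∈ Subgroup.zpowers σ) (x : K) :
    algebraMap F K (Algebra.norm F x) = ∏ i ∈ range (orderOf σ), (σ ^ i) x := by
  classical
  rw [Algebra.norm_eq_prod_automorphisms, ← IsCyclic.image_range_orderOf hσ,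
    prod_image fun i hi j hj ↦ pow_injOn_Iio_orderOf (by simpa using hi) (by simpa using hj)]

theorem exists_div_apply_eq_of_norm_eq_one (hσ : ∀ τ : K ≃ₐ[F] K, τ ∈ Subgroup.zpowers σ)
    {α : K} (hα : Algebra.norm F α = 1) : ∃ b ≠ 0, b / σ b = α :=
  σ.exists_div_apply_eq_of_prod_pow_eq_one (orderOf_pos σ) <| by
    rw [← algebraMap_norm_eq_prod_pow_of_forall_mem_zpowers hσ, hα, map_one]

theorem algebraMap_norm_eq_mul_apply_mul_apply (hσ : ∀ τ : K ≃ₐ[F] K, τ ∈ Subgroup.zpowers σ)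
    (h3 : orderOf σ = 3) (x : K) :
    algebraMap F K (Algebra.norm F x) = x * σ x * σ (σ x) := by
  simp [algebraMap_norm_eq_prod_pow_of_forall_mem_zpowers hσ, h3, prod_range_succ]

theorem div_apply_div_apply_div_eq (hσ : ∀ τ : K ≃ₐ[F] K, τ ∈ Subgroup.zpowers σ)
    (h3 : orderOf σ = 3) {e : K} (he : e ≠ 0) :
    e / σ e / σ (e / σ e) = algebraMap F K (Algebra.norm F e) / σ e ^ 3 := by
  have : σ e ≠ 0 := (map_ne_zero σ).2 he
  have : σ (σ e) ≠ 0 := (map_ne_zero σ).2 this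
  rw [algebraMap_norm_eq_mul_apply_mul_apply hσ h3, map_div₀]
  field_simp

theorem exists_eq_algebraMap_mul_norm_div_of_norm_eq_one
    (hσ : ∀ τ : K ≃ₐ[F] K, τ ∈ Subgroup.zpowers σ) (h3 : orderOf σ = 3) {α γ : K}
    (hα : Algebra.norm F α = 1) (hγ : σ α / α = γ ^ 3) :
    ∃ (r : F) (e : K), r ^ 3 = 1 ∧ e ≠ 0 ∧
      α = algebraMap F K (r * Algebra.norm F e) / σ e ^ 3 := by
  have hK : Odd (finrank F K) := by
    rw [← orderOf_eq_finrank_of_forall_mem_zpowers hσ, h3]; decide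
  obtain ⟨c, hc, rfl⟩ := exists_div_apply_eq_of_norm_eq_one hσ hα
  have hσc : σ c ≠ 0 := (map_ne_zero σ).2 hc
  rw [← inv_div, div_apply_div_apply_div_eq hσ h3 hc, inv_div] at hγ
  have hγ0 : γ ≠ 0 := by
    rintro rfl
    simp [Algebra.norm_ne_zero_iff.2 hc, hσc] at hγ
  set d := σ c / γ
  have hd : d ≠ 0 := div_ne_zero hσc hγ0
  have hNc : algebraMap F K (Algebra.norm F c) = d ^ 3 := by
    rw [div_pow, ← hγ]
    field_simp
  obtain ⟨r, hr, hσd⟩ := σ.exists_apply_eq_algebraMap_mul_of_apply_pow_three_eq hK hd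
    (by rw [← hNc, AlgEquiv.commutes])
  have hNd : algebraMap F K (Algebra.norm F d) = d ^ 3 := by
    rw [algebraMap_norm_eq_mul_apply_mul_apply hσ h3, hσd, map_mul, AlgEquiv.commutes, hσd]
    have hr' : algebraMap F K r ^ 3 = 1 := by rw [← map_pow, hr, map_one]
    linear_combination d ^ 3 * hr'
  obtain ⟨e, he, hce⟩ : ∃ e ≠ 0, e / σ e = c / d := by
    refine exists_div_apply_eq_of_norm_eq_one hσ (FaithfulSMul.algebraMap_injective F K ?_)
    rw [div_eq_mul_inv, map_mul, Algebra.norm_inv, map_mul, map_inv₀, hNc, hNd,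
      mul_inv_cancel₀ (pow_ne_zero 3 hd), map_one]
  refine ⟨r⁻¹, e, by rw [inv_pow, hr, inv_one], he, ?_⟩
  have hu : σ (e / σ e) ≠ 0 := (map_ne_zero σ).2 (div_ne_zero he ((map_ne_zero σ).2 he))
  have hr0 : algebraMap F K r ≠ 0 := by
    rintro h
    simp [(FaithfulSMul.algebraMap_eq_zero_iff F K).1 h] at hr
  rw [map_mul, map_inv₀, mul_div_assoc, ← div_apply_div_apply_div_eq hσ h3 he,
    ← div_mul_cancel₀ c hd, ← hce, map_mul, hσd]
  field_simp

end CyclicGalois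

theorem stmt_8_general (F K : Type*) [Field F] [Field K]
    [Algebra F K] [IsGalois F K] (hdeg : Module.finrank F K = 3)
    (σ : K ≃ₐ[F] K) (hσ : ∀ τ : K ≃ₐ[F] K, τ ∈ Subgroup.zpowers σ) :
    {x : K | ∃ α δ : K, δ ≠ 0 ∧ x = α * δ ^ 3 ∧ Algebra.norm F α = 1 ∧
        ∃ γ : K, σ α / α = γ ^ 3}
      = {x : K | ∃ (r : F) (β δ : K), r ^ 3 = 1 ∧ β ≠ 0 ∧ δ ≠ 0 ∧
        x = algebraMap F K (r * Algebra.norm F β) * δ ^ 3} := by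
  have : FiniteDimensional F K := Module.finite_of_finrank_pos (by omega)
  have h3 : orderOf σ = 3 := (orderOf_eq_finrank_of_forall_mem_zpowers hσ).trans hdeg
  ext x
  constructor
  · rintro ⟨α, δ, hδ, rfl, hα, γ, hγ⟩
    obtain ⟨r, e, hr, he, rfl⟩ := exists_eq_algebraMap_mul_norm_div_of_norm_eq_one hσ h3 hα hγ
    exact ⟨r, e, δ / σ e, hr, he, div_ne_zero hδ ((map_ne_zero σ).2 he), by ring⟩
  · rintro ⟨r, β, δ, hr, hβ, hδ, rfl⟩
    have hr0 : r ≠ 0 := by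
      rintro rfl
      simp at hr
    refine ⟨algebraMap F K (r * Algebra.norm F β) / β ^ 3, β * δ, mul_ne_zero hβ hδ, ?_, ?_,
      β / σ β, σ.apply_algebraMap_div_pow_div_eq
        (mul_ne_zero hr0 (Algebra.norm_ne_zero_iff.2 hβ)) hβ⟩
    · field_simp
    · rw [← hdeg, norm_algebraMap_mul_norm_div_pow_finrank r hβ, hdeg, hr]

/-- Let `K/F` be a cyclic cubic extension of number fields with `Gal(K/F) = ⟨σ⟩`.
Identifying subsets of `K*/(K*)³` with the corresponding saturated (closed under
multiplication by nonzero cubes) subsets of `K*`, the `G`-invariant part of the image of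
the norm-one elements of `K*` in `K*/(K*)³`, namely
`{α·(K*)³ : N_{K/F}(α) = 1 and σ(α)/α ∈ (K*)³}`, equals the image of
`μ₃(F)·N_{K/F}(K*)`, namely `{r·N_{K/F}(β)·(K*)³ : r ∈ F*, r³ = 1, β ∈ K*}`. -/
theorem stmt_8 (F K : Type*) [Field F] [NumberField F] [Field K] [NumberField K]
    [Algebra F K] [IsGalois F K] (hdeg : Module.finrank F K = 3)
    (σ : K ≃ₐ[F] K) (hσ : ∀ τ : K ≃ₐ[F] K, τ ∈ Subgroup.zpowers σ) :
    {x : K | ∃ α δ : K, δ ≠ 0 ∧ x = α * δ ^ 3 ∧ Algebra.norm F α = 1 ∧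
        ∃ γ : K, σ α / α = γ ^ 3}
      = {x : K | ∃ (r : F) (β δ : K), r ^ 3 = 1 ∧ β ≠ 0 ∧ δ ≠ 0 ∧
        x = algebraMap F K (r * Algebra.norm F β) * δ ^ 3} :=
  stmt_8_general F K hdeg σ hσ
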